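/- arXiv:2202.05374 — 2 statements merged into one kernel-verified Lean document; each statement's English description precedes it below -/
import Mathlib

section
/- Let b>0, β>0, γ≥0, p∈[0,1) satisfy (1-p)β > b+γ. Then all eigenvalues of the endemic-equilibrium Jacobian of the normalized SIRV system have negative real part. Specifically, with x = sqrt(b²β²p² + 4b⁴ - 4b³β + b²β² + 4bγ³ + 4(3b² - bβ)γ² + 4(3b³ - 2b²β)γ + 2(2b³β - b²β² + 4b²βγ + 2bβγ²)p) (or its appropriate complex continuation when the radicand is negative), the eigenvalues are (-(1-p)βb ± x)/(2(b+γ)), -b, -b, and each has negative real part. -/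
open Polynomial

/-!
The Jacobian is block lower triangular, so its characteristic polynomial is that of the
upper-left 2×2 block times `(X + b)²`. The radicand is `(b+γ)²` times the discriminant of
that block, i.e. `((1-p)βb)² - 4(b+γ)²·det`, and the determinant `b((1-p)β-(b+γ))` is
positive; hence every square root `x` of the radicand has `|Re x| < (1-p)βb`, which makes
both `(-(1-p)βb ± x)/(2(b+γ))` lie in the open left half-plane.
-/

theorem Matrix.charpoly_fin_four_of_upperRight_eq_zero {R : Type*} [CommRing R]
    (a b c d e f g h i j k : R) :
    (!![a, b, 0, 0; c, d, 0, 0; e, f, g, 0; h, i, j, k]).charpoly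
      = (!![a, b; c, d]).charpoly * (X - C g) * (X - C k) := by
  simp only [Matrix.charpoly, Matrix.det_succ_row_zero, Fin.sum_univ_succ, Matrix.charmatrix_apply]
  simp [Fin.succAbove, Matrix.diagonal_apply]
  ring

theorem Polynomial.X_sq_sub_C_mul_X_add_C_eq_mul {K : Type*} [Field K] [NeZero (2 : K)]
    {t d s : K} (h : discrim 1 (-t) d = s * s) :
    X ^ 2 - C t * X + C d = (X - C ((t - s) / 2)) * (X - C ((t + s) / 2)) := by
  have h2 : (2 : K) ≠ 0 := two_ne_zero
  have hsum : C t = C ((t - s) / 2) + C ((t + s) / 2) := by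
    rw [← C_add]; congr 1; field_simp; ring
  have hprod : C d = C ((t - s) / 2) * C ((t + s) / 2) := by
    rw [← C_mul]; congr 1; rw [discrim] at h; field_simp; linear_combination (-1 : K) * h
  rw [hsum, hprod]; ring

theorem Complex.abs_re_lt_of_sq_eq_ofReal {z : ℂ} {r t : ℝ} (hz : z ^ 2 = r) (hr : r < t ^ 2)
    (ht : 0 < t) : |z.re| < t := by
  have hre : z.re ^ 2 - z.im ^ 2 = r := by simpa [sq] using congrArg Complex.re hz
  have him : z.re * z.im = 0 := by
    have him2 := congrArg Complex.im hz
    simp [sq] at him2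
    linarith
  rcases mul_eq_zero.1 him with h | h
  · simpa [h] using ht
  · exact abs_lt_of_sq_lt_sq (by rw [h] at hre; linarith) ht.le

theorem Complex.re_neg_ofReal_add_div_ofReal_neg {x : ℂ} {t m : ℝ} (hm : 0 < m)
    (hx : |x.re| < t) : ((-(t : ℂ) + x) / (m : ℂ)).re < 0 := by
  rw [Complex.div_ofReal_re]
  have hxt : x.re < t := (abs_lt.1 hx).2
  simp only [Complex.add_re, Complex.neg_re, Complex.ofReal_re]
  exact div_neg_of_neg_of_pos (by linarith) hm

theorem sirv_radicand_eq (b β γ p : ℝ) :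
    b ^ 2 * β ^ 2 * p ^ 2 + 4 * b ^ 4 - 4 * b ^ 3 * β + b ^ 2 * β ^ 2
      + 4 * b * γ ^ 3 + 4 * (3 * b ^ 2 - b * β) * γ ^ 2
      + 4 * (3 * b ^ 3 - 2 * b ^ 2 * β) * γ
      + 2 * (2 * b ^ 3 * β - b ^ 2 * β ^ 2 + 4 * b ^ 2 * β * γ + 2 * b * β * γ ^ 2) * p
      = ((1 - p) * β * b) ^ 2 - 4 * (b + γ) ^ 2 * (b * ((1 - p) * β - (b + γ))) := by
  ring

theorem sirv_endemic_jacobian_eigenvalues_general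
    (b β γ p : ℝ) (hb : 0 < b) (hγ : 0 ≤ γ)
    (hcond : (1 - p) * β > b + γ)
    (J : Matrix (Fin 4) (Fin 4) ℂ)
    (hJ : J = !![(b * β * (p - 1) / (b + γ) : ℂ), -((γ : ℂ) + b), 0, 0;
                 -((b * β * p + b ^ 2 - b * β + b * γ : ℂ)) / ((b : ℂ) + γ), 0, 0, 0;
                 0, (γ : ℂ), -(b : ℂ), 0;
                 0, 0, 0, -(b : ℂ)])
    (x : ℂ)
    (hx : x ^ 2 = ((b ^ 2 * β ^ 2 * p ^ 2 + 4 * b ^ 4 - 4 * b ^ 3 * β + b ^ 2 * β ^ 2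
            + 4 * b * γ ^ 3 + 4 * (3 * b ^ 2 - b * β) * γ ^ 2
            + 4 * (3 * b ^ 3 - 2 * b ^ 2 * β) * γ
            + 2 * (2 * b ^ 3 * β - b ^ 2 * β ^ 2 + 4 * b ^ 2 * β * γ + 2 * b * β * γ ^ 2) * p : ℝ) : ℂ))
    (e₁ e₂ : ℂ)
    (he₁ : e₁ = (-(((1 - p) * β * b : ℝ) : ℂ) - x) / (2 * ((b : ℂ) + γ)))
    (he₂ : e₂ = (-(((1 - p) * β * b : ℝ) : ℂ) + x) / (2 * ((b : ℂ) + γ))) :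
    J.charpoly = (X - C e₁) * (X - C e₂) * (X - C (-(b : ℂ))) ^ 2 ∧
    e₁.re < 0 ∧ e₂.re < 0 ∧ (-(b : ℂ)).re < 0 := by
  rw [sirv_radicand_eq] at hx
  have hbγ : 0 < b + γ := by linarith
  have hbγ' : (b : ℂ) + γ ≠ 0 := by exact_mod_cast hbγ.ne'
  have hT : 0 < (1 - p) * β * b := mul_pos (by linarith) hb
  have hx_re : |x.re| < (1 - p) * β * b := by
    refine Complex.abs_re_lt_of_sq_eq_ofReal hx ?_ hT
    have hdet : 0 < 4 * (b + γ) ^ 2 * (b * ((1 - p) * β - (b + γ))) := by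
      have hgap := sub_pos.2 hcond; positivity
    linarith
  have hden : 2 * ((b : ℂ) + γ) = ((2 * (b + γ) : ℝ) : ℂ) := by push_cast; ring
  refine ⟨?_, ?_, ?_, by simpa using hb⟩
  · rw [hJ, Matrix.charpoly_fin_four_of_upperRight_eq_zero, Matrix.charpoly_fin_two,
      Matrix.trace_fin_two_of, Matrix.det_fin_two_of,
      X_sq_sub_C_mul_X_add_C_eq_mul (s := x / ((b : ℂ) + γ))]
    · have h₁ : (b * β * (p - 1) / (b + γ) + 0 - x / (b + γ)) / 2 = e₁ := by
        rw [he₁]; field_simp; push_cast; ring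
      have h₂ : (b * β * (p - 1) / (b + γ) + 0 + x / (b + γ)) / 2 = e₂ := by
        rw [he₂]; field_simp; push_cast; ring
      rw [h₁, h₂]; ring
    · rw [discrim]; field_simp; push_cast at hx ⊢; linear_combination -hx
  · rw [he₁, hden, sub_eq_add_neg]
    exact Complex.re_neg_ofReal_add_div_ofReal_neg (by positivity) (by simpa using hx_re)
  · rw [he₂, hden]
    exact Complex.re_neg_ofReal_add_div_ofReal_neg (by positivity) hx_re

/-- If (1-p)β > b+γ, all eigenvalues of the endemic-equilibrium Jacobian of the
normalized SIRV system have negative real part.  With x any complex square root of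
the radicand, the eigenvalues are (-(1-p)βb ± x)/(2(b+γ)), -b, -b, and each has
negative real part. -/
theorem sirv_endemic_jacobian_eigenvalues
    (b β γ p : ℝ) (hb : 0 < b) (hβ : 0 < β) (hγ : 0 ≤ γ)
    (hp : p ∈ Set.Ico (0:ℝ) 1)
    (hcond : (1 - p) * β > b + γ)
    (J : Matrix (Fin 4) (Fin 4) ℂ)
    (hJ : J = !![(b * β * (p - 1) / (b + γ) : ℂ), -((γ : ℂ) + b), 0, 0;
                 -((b * β * p + b ^ 2 - b * β + b * γ : ℂ)) / ((b : ℂ) + γ), 0, 0, 0;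
                 0, (γ : ℂ), -(b : ℂ), 0;
                 0, 0, 0, -(b : ℂ)])
    (x : ℂ)
    (hx : x ^ 2 = ((b ^ 2 * β ^ 2 * p ^ 2 + 4 * b ^ 4 - 4 * b ^ 3 * β + b ^ 2 * β ^ 2
            + 4 * b * γ ^ 3 + 4 * (3 * b ^ 2 - b * β) * γ ^ 2
            + 4 * (3 * b ^ 3 - 2 * b ^ 2 * β) * γ
            + 2 * (2 * b ^ 3 * β - b ^ 2 * β ^ 2 + 4 * b ^ 2 * β * γ + 2 * b * β * γ ^ 2) * p : ℝ) : ℂ))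
    (e₁ e₂ : ℂ)
    (he₁ : e₁ = (-(((1 - p) * β * b : ℝ) : ℂ) - x) / (2 * ((b : ℂ) + γ)))
    (he₂ : e₂ = (-(((1 - p) * β * b : ℝ) : ℂ) + x) / (2 * ((b : ℂ) + γ))) :
    J.charpoly = (X - C e₁) * (X - C e₂) * (X - C (-(b : ℂ))) ^ 2 ∧
    e₁.re < 0 ∧ e₂.re < 0 ∧ (-(b : ℂ)).re < 0 :=
  sirv_endemic_jacobian_eigenvalues_general b β γ p hb hγ hcond J hJ x hx e₁ e₂ he₁ he₂
end

section
/- Let b>0 and consider the real 2×2 matrix M = [[-(1-p)βb/(b+γ), -(γ+b)],[-(bβp + b² - bβ + bγ)/(b+γ), 0]] with β>0, γ≥0, p∈[0,1). If (1-p)β > b+γ, then trace(M) < 0 and det(M) = b((1-p)β - (b+γ)) > 0, hence both eigenvalues of M have negative real part. -/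
open Polynomial

/-- If t < 0 and d > 0 then any complex root of z² - t z + d has negative real part. -/
lemma quad_root_neg_re (t d : ℝ) (ht : t < 0) (hd : 0 < d) (z : ℂ)
    (h : z ^ 2 - (t : ℂ) * z + (d : ℂ) = 0) : z.re < 0 := by
  have hre := congrArg Complex.re h
  have him := congrArg Complex.im h
  simp [Complex.ext_iff, pow_two, Complex.add_re, Complex.sub_re, Complex.mul_re,
    Complex.mul_im, Complex.ofReal_re, Complex.ofReal_im] at hre him
  -- hre : z.re*z.re - z.im*z.im - t*z.re + d = 0
  -- him : (z.re*z.im + z.im*z.re) - t*z.im = 0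
  rcases eq_or_ne z.im 0 with h0 | h0
  · nlinarith [sq_nonneg z.re, sq_nonneg (z.re - t)]
  · have : 2 * z.re = t := by
      have := mul_right_cancel₀ h0 (by nlinarith : (2 * z.re) * z.im = t * z.im)
      linarith [this]
    linarith

lemma charpoly_fin_two' (A : Matrix (Fin 2) (Fin 2) ℝ) :
    A.charpoly = X ^ 2 - C A.trace * X + C A.det := by
  rw [Matrix.charpoly, Matrix.det_fin_two, Matrix.charmatrix_apply_eq,
    Matrix.charmatrix_apply_eq, Matrix.charmatrix_apply_ne _ _ _ (by decide),
    Matrix.charmatrix_apply_ne _ _ _ (by decide), Matrix.trace_fin_two, Matrix.det_fin_two]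
  simp only [map_add, map_mul, map_sub]
  ring

/-- For the (s,i)-block M of the endemic Jacobian: if (1-p)β > b+γ then
trace M < 0 and det M = b((1-p)β-(b+γ)) > 0, hence both eigenvalues of M
have negative real part. -/
theorem sirv_endemic_two_by_two_block
    (b β γ p : ℝ) (hb : 0 < b) (hβ : 0 < β) (hγ : 0 ≤ γ)
    (hp : p ∈ Set.Ico (0:ℝ) 1)
    (hcond : (1 - p) * β > b + γ)
    (M : Matrix (Fin 2) (Fin 2) ℝ)
    (hM : M = !![-((1 - p) * β * b) / (b + γ), -(γ + b);
                 -(b * β * p + b ^ 2 - b * β + b * γ) / (b + γ), 0]) :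
    M.trace < 0 ∧
    M.det = b * ((1 - p) * β - (b + γ)) ∧ 0 < M.det ∧
    (∀ z : ℂ, ((M.map (Complex.ofReal)).charpoly).IsRoot z → z.re < 0) := by
  obtain ⟨hp0, hp1⟩ := hp
  have hbγ : 0 < b + γ := by linarith
  have htr : M.trace = -((1 - p) * β * b) / (b + γ) := by
    subst hM
    simp [Matrix.trace_fin_two]
  have htrneg : M.trace < 0 := by
    rw [htr]
    apply div_neg_of_neg_of_pos _ hbγ
    nlinarith
  have hdet : M.det = b * ((1 - p) * β - (b + γ)) := by
    subst hM
    rw [Matrix.det_fin_two]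
    simp
    field_simp
    ring
  have hdetpos : 0 < M.det := by
    rw [hdet]; exact mul_pos hb (by linarith)
  refine ⟨htrneg, hdet, hdetpos, ?_⟩
  intro z hz
  have hcp : (M.map (Complex.ofReal)).charpoly = M.charpoly.map Complex.ofRealHom := by
    exact (Matrix.charpoly_map M Complex.ofRealHom)
  rw [hcp, charpoly_fin_two'] at hz
  have hz' : z ^ 2 - (M.trace : ℂ) * z + (M.det : ℂ) = 0 := by
    have := hz
    simp [Polynomial.IsRoot, Polynomial.eval_map, Polynomial.eval₂_sub, Polynomial.eval₂_add,
      Polynomial.eval₂_mul, Polynomial.eval₂_pow] at this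
    linear_combination this
  exact quad_root_neg_re M.trace M.det htrneg hdetpos z hz'
end
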